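/- arXiv:0912.4771 — 2 statements merged into one kernel-verified Lean document; each statement's English description precedes it below -/
import Mathlib

section
/- For a Lipschitz function f on the Bernoulli space X = {1,...,d}^ℕ with the metric d_θ(x,y) = θ^N (where N is the first index where x and y differ), and β(f) = sup over shift-invariant probabilities ν of ∫f dν, the infimum over all periodic points x of I(x) := n_x·β(f) − f^{n_x}(x) equals 0, where n_x is the minimal period of x and f^n(x) = Σ_{i=0}^{n−1} f(σ^i x). -/
open MeasureTheory Filter Real Topology
open scoped ENNReal

noncomputable section

abbrev X (d : ℕ) : Type := ℕ → Fin d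

def shift {d : ℕ} (x : X d) : X d := fun n => x (n + 1)

def birkhoff {d : ℕ} (f : X d → ℝ) (n : ℕ) (x : X d) : ℝ :=
  ∑ i ∈ Finset.range n, f (shift^[i] x)

def IsPeriodic {d : ℕ} (x : X d) : Prop := ∃ n, 0 < n ∧ shift^[n] x = x

def minPer {d : ℕ} (x : X d) : ℕ := Function.minimalPeriod shift x

def beta {d : ℕ} (f : X d → ℝ) : ℝ :=
  sSup {r : ℝ | ∃ μ : Measure (X d), IsProbabilityMeasure μ ∧ μ.map shift = μ ∧ r = ∫ x, f x ∂μ}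

def Ifun {d : ℕ} (f : X d → ℝ) (x : X d) : ℝ :=
  (minPer x : ℝ) * beta f - birkhoff f (minPer x) x

def dtheta {d : ℕ} (θ : ℝ) (x y : X d) : ℝ :=
  letI : Decidable (x = y) := Classical.dec _
  if h : x = y then 0 else θ ^ Nat.find (Function.ne_iff.mp h)

def LipWrt {d : ℕ} (θ C : ℝ) (f : X d → ℝ) : Prop :=
  ∀ x y, |f x - f y| ≤ C * dtheta θ x y

def periodize {d : ℕ} (n : ℕ) (w : Fin (n + 1) → Fin d) : X d :=
  fun i => w ⟨i % (n + 1), Nat.mod_lt i (Nat.succ_pos n)⟩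

def pressure {d : ℕ} (g : X d → ℝ) : ℝ :=
  Filter.limsup (fun n : ℕ =>
    Real.log (∑ w : Fin (n + 1) → Fin d, Real.exp (birkhoff g (n + 1) (periodize n w))) / ((n : ℝ) + 1))
    Filter.atTop

def zetaVal {d : ℕ} (f : X d → ℝ) (c s : ℝ) (k : X d → ℝ) : ℝ :=
  ∑' n : ℕ, ∑ w : Fin (n + 1) → Fin d,
    Real.exp (c * s * birkhoff f (n + 1) (periodize n w) - ((n : ℝ) + 1) * pressure (fun y => c * f y))
      * (birkhoff k (n + 1) (periodize n w) / ((n : ℝ) + 1))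

def etaVal {d : ℕ} (f : X d → ℝ) (c : ℝ) (N : ℕ) (k : X d → ℝ) : ℝ :=
  ∑ n ∈ Finset.range N, ∑ w : Fin (n + 1) → Fin d,
    Real.exp (c * birkhoff f (n + 1) (periodize n w)) * (birkhoff k (n + 1) (periodize n w) / ((n : ℝ) + 1))

def piVal {d : ℕ} (f : X d → ℝ) (c : ℝ) (N : ℕ) (k : X d → ℝ) : ℝ :=
  ∑ n ∈ Finset.range N, ∑ w : Fin (n + 1) → Fin d,
    Real.exp (c * birkhoff f (n + 1) (periodize n w) - ((n : ℝ) + 1) * pressure (fun y => c * f y))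
      * (birkhoff k (n + 1) (periodize n w) / ((n : ℝ) + 1))

def cylSet {d : ℕ} (m : ℕ) (w : Fin m → Fin d) : Set (X d) :=
  {x : X d | ∀ i : Fin m, x i = w i}

def Itilde {d : ℕ} (θ : ℝ) (f : X d → ℝ) (x : X d) : EReal :=
  ⨆ ε : {e : ℝ // 0 < e},
    sInf {r : EReal | ∃ y : X d, IsPeriodic y ∧ dtheta θ x y ≤ ε.1 ∧ r = ((Ifun f y : ℝ) : EReal)}

def orbitMeasure {d : ℕ} (x : X d) : Measure (X d) :=
  ((minPer x : ℝ≥0∞))⁻¹ • ∑ i ∈ Finset.range (minPer x), Measure.dirac (shift^[i] x)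

/-!
Mañé's lemma: the sub-action `u x = sup {S_n f y - n β | σⁿ y = x}` is finite, because
periodizing an orbit segment changes its Birkhoff sum by at most `K / (1 - θ)` and periodic
orbits satisfy `S_n f ≤ n β`. Hence `g = β - f + u ∘ σ - u` is nonnegative and cylinder-Lipschitz,
and on a periodic orbit of minimal period `q` one has `S_q g = I`. Pick an invariant `μ` with
`∫ f dμ` close to `β`; then `∫ S_N g dμ = N (β - ∫ f dμ)` is small, so `S_N g x` is small for some
`x`. For `N = d ^ m` two of the `m`-blocks of `x` starting before `N` coincide, and repeating the
segment between them gives a periodic point `y` with `I y ≤ S_N g x + O(θ ^ m)`.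
-/

open Function Finset

section Cylinder

variable {d : ℕ}

lemma shift_iterate_apply (n : ℕ) (x : X d) (i : ℕ) : shift^[n] x i = x (i + n) := by
  induction n generalizing x with
  | zero => rfl
  | succ n ih => rw [iterate_succ_apply, ih]; rfl

lemma continuous_shift : Continuous (shift (d := d)) :=
  continuous_pi fun i => continuous_apply (i + 1)

lemma measurable_shift : Measurable (shift (d := d)) := continuous_shift.measurable

lemma birkhoff_eq_birkhoffSum (h : X d → ℝ) : birkhoff h = birkhoffSum shift h := rfl

lemma continuous_birkhoff {h : X d → ℝ} (hh : Continuous h) (n : ℕ) :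
    Continuous (birkhoff h n) :=
  continuous_finsetSum _ fun i _ => hh.comp (continuous_shift.iterate i)

lemma integrable_of_continuous {h : X d → ℝ} (hh : Continuous h) (μ : Measure (X d))
    [IsFiniteMeasure μ] : Integrable h μ :=
  hh.integrable_of_hasCompactSupport (.of_compactSpace h)

def Agree (m : ℕ) (x y : X d) : Prop := ∀ i < m, x i = y i

lemma agree_zero (x y : X d) : Agree 0 x y := fun _ hi => absurd hi (Nat.not_lt_zero _)

lemma Agree.symm {m : ℕ} {x y : X d} (h : Agree m x y) : Agree m y x :=
  fun i hi => (h i hi).symm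

lemma Agree.shift_iterate {m : ℕ} {x y : X d} (h : Agree m x y) (k : ℕ) :
    Agree (m - k) (shift^[k] x) (shift^[k] y) := fun i hi => by
  rw [shift_iterate_apply, shift_iterate_apply]
  exact h _ (by omega)

lemma dtheta_nonneg {θ : ℝ} (hθ0 : 0 ≤ θ) (x y : X d) : 0 ≤ dtheta θ x y := by
  unfold dtheta
  split
  · exact le_rfl
  · positivity

lemma dtheta_le_pow {θ : ℝ} (hθ0 : 0 ≤ θ) (hθ1 : θ ≤ 1) {m : ℕ} {x y : X d}
    (h : Agree m x y) : dtheta θ x y ≤ θ ^ m := by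
  unfold dtheta
  split
  · positivity
  · next hne =>
    refine pow_le_pow_of_le_one hθ0 hθ1 (not_lt.1 fun hlt => ?_)
    exact Nat.find_spec (Function.ne_iff.mp hne) (h _ hlt)

lemma exists_agree_shift_iterate (x : X d) (m : ℕ) :
    ∃ i j, i < j ∧ j ≤ d ^ m ∧ Agree m (shift^[i] x) (shift^[j] x) := by
  have hcard : (univ : Finset (Fin m → Fin d)).card < (range (d ^ m + 1)).card := by simp
  obtain ⟨a, ha, b, hb, hne, heq⟩ := exists_ne_map_eq_of_card_lt_of_maps_to hcard
    (f := fun i (k : Fin m) => shift^[i] x k) (fun _ _ => mem_coe.2 (mem_univ _))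
  have hab : Agree m (shift^[a] x) (shift^[b] x) := fun k hk => congrFun heq ⟨k, hk⟩
  rw [mem_range] at ha hb
  rcases hne.lt_or_gt with h | h
  · exact ⟨a, b, h, by omega, hab⟩
  · exact ⟨b, a, h, by omega, hab.symm⟩

def splice (n : ℕ) (y x : X d) : X d := fun i => if i < n then y i else x (i - n)

lemma shift_iterate_splice (n : ℕ) (y x : X d) : shift^[n] (splice n y x) = x := by
  funext i
  simp [shift_iterate_apply, splice]

lemma agree_splice {n m : ℕ} {y x x' : X d} (hy : shift^[n] y = x) (hx : Agree m x x') :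
    Agree (n + m) y (splice n y x') := by
  intro i hi
  simp only [splice]
  split_ifs with h
  · rfl
  · rw [← hx _ (by omega), ← hy, shift_iterate_apply, Nat.sub_add_cancel (not_lt.1 h)]

def repeatPrefix (p : ℕ) (z : X d) : X d := fun t => z (t % p)

lemma isPeriodicPt_repeatPrefix (p : ℕ) (z : X d) : IsPeriodicPt shift p (repeatPrefix p z) := by
  funext t
  simp [shift_iterate_apply, repeatPrefix]

lemma agree_repeatPrefix {p m : ℕ} {z : X d} (hp : 0 < p) (hz : Agree m (shift^[p] z) z) :
    Agree (p + m) z (repeatPrefix p z) := by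
  intro t ht
  induction t using Nat.strong_induction_on with
  | _ t ih =>
    rcases lt_or_ge t p with h | h
    · simp [repeatPrefix, Nat.mod_eq_of_lt h]
    · have hzt := hz (t - p) (by omega)
      rw [shift_iterate_apply, Nat.sub_add_cancel h] at hzt
      rw [hzt, ih (t - p) (by omega) (by omega)]
      simp [repeatPrefix, ← Nat.mod_eq_sub_mod h]

lemma birkhoff_nonneg {h : X d → ℝ} (hh : ∀ x, 0 ≤ h x) (n : ℕ) (x : X d) :
    0 ≤ birkhoff h n x :=
  sum_nonneg fun _ _ => hh _

lemma birkhoff_shift_iterate_le {h : X d → ℝ} (hh : ∀ x, 0 ≤ h x) {i p N : ℕ}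
    (hN : i + p ≤ N) (x : X d) : birkhoff h p (shift^[i] x) ≤ birkhoff h N x := by
  obtain ⟨r, rfl⟩ := Nat.exists_eq_add_of_le hN
  have hi := birkhoff_nonneg hh i x
  have hr := birkhoff_nonneg hh r (shift^[i + p] x)
  simp only [birkhoff_eq_birkhoffSum, birkhoffSum_add] at *
  linarith

end Cylinder

def CylinderLipschitzWith {d : ℕ} (θ K : ℝ) (h : X d → ℝ) : Prop :=
  ∀ m x y, Agree m x y → |h x - h y| ≤ K * θ ^ m

namespace CylinderLipschitzWith

variable {d : ℕ} {θ K L : ℝ} {h k : X d → ℝ}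

lemma nonneg (hh : CylinderLipschitzWith θ K h) (x : X d) : 0 ≤ K := by
  simpa using hh 0 x x (agree_zero x x)

lemma const (c : ℝ) : CylinderLipschitzWith θ 0 (fun _ : X d => c) := fun _ _ _ _ => by simp

lemma add (hh : CylinderLipschitzWith θ K h) (hk : CylinderLipschitzWith θ L k) :
    CylinderLipschitzWith θ (K + L) (h + k) := fun m x y hxy =>
  calc |(h + k) x - (h + k) y| = |(h x - h y) + (k x - k y)| := by
        simp only [Pi.add_apply]; ring_nf
    _ ≤ |h x - h y| + |k x - k y| := abs_add_le _ _
    _ ≤ (K + L) * θ ^ m := by linarith [hh m x y hxy, hk m x y hxy]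

lemma sub (hh : CylinderLipschitzWith θ K h) (hk : CylinderLipschitzWith θ L k) :
    CylinderLipschitzWith θ (K + L) (h - k) := fun m x y hxy =>
  calc |(h - k) x - (h - k) y| = |(h x - h y) - (k x - k y)| := by
        simp only [Pi.sub_apply]; ring_nf
    _ ≤ |h x - h y| + |k x - k y| := abs_sub _ _
    _ ≤ (K + L) * θ ^ m := by linarith [hh m x y hxy, hk m x y hxy]

lemma comp_shift (hθ0 : 0 < θ) (hθ1 : θ ≤ 1) (hh : CylinderLipschitzWith θ K h) :
    CylinderLipschitzWith θ (K / θ) (h ∘ shift) := fun m x y hxy =>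
  calc |h (shift x) - h (shift y)| ≤ K * θ ^ (m - 1) := hh _ _ _ (hxy.shift_iterate 1)
    _ ≤ K / θ * θ ^ m := by
      rcases m with _ | m
      · simpa using le_div_self (hh.nonneg x) hθ0 hθ1
      · rw [Nat.add_sub_cancel]
        exact le_of_eq (by field_simp; ring)

lemma continuous (hθ0 : 0 ≤ θ) (hθ1 : θ < 1) (hh : CylinderLipschitzWith θ K h) :
    Continuous h := by
  refine continuous_iff_continuousAt.2 fun x => Metric.tendsto_nhds.2 fun ε hε => ?_
  obtain ⟨m, hm⟩ : ∃ m, K * θ ^ m < ε :=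
    (((tendsto_pow_atTop_nhds_zero_of_lt_one hθ0 hθ1).const_mul K).eventually
      (gt_mem_nhds (by simpa using hε))).exists
  have hnear : ∀ᶠ y in 𝓝 x, Agree m y x :=
    (eventually_all_finite (Set.finite_Iio m)).2 fun i _ =>
      (continuous_apply i).continuousAt.eventually_mem ((isOpen_discrete {x i}).mem_nhds rfl)
  filter_upwards [hnear] with y hy
  exact (hh m y x hy).trans_lt hm

lemma abs_birkhoff_sub_le (hθ0 : 0 ≤ θ) (hθ1 : θ < 1) (hh : CylinderLipschitzWith θ K h)
    {n m : ℕ} {x y : X d} (hxy : Agree (n + m) x y) :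
    |birkhoff h n x - birkhoff h n y| ≤ K * θ ^ m / (1 - θ) := by
  have hgeom : ∑ i ∈ range n, θ ^ (n + m - i) ≤ θ ^ m / (1 - θ) :=
    calc ∑ i ∈ range n, θ ^ (n + m - i) = ∑ j ∈ Ico (m + 1) (m + 1 + n), θ ^ j := by
          rw [sum_Ico_eq_sum_range, Nat.add_sub_cancel_left, ← sum_range_reflect]
          exact sum_congr rfl fun i hi => by rw [mem_range] at hi; congr 1; omega
      _ ≤ θ ^ (m + 1) / (1 - θ) := geom_sum_Ico_le_of_lt_one hθ0 hθ1
      _ ≤ θ ^ m / (1 - θ) :=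
          div_le_div_of_nonneg_right (pow_le_pow_of_le_one hθ0 hθ1.le m.le_succ) (by linarith)
  rw [birkhoff, birkhoff, ← sum_sub_distrib]
  calc |∑ i ∈ range n, (h (shift^[i] x) - h (shift^[i] y))|
      ≤ ∑ i ∈ range n, |h (shift^[i] x) - h (shift^[i] y)| := abs_sum_le_sum_abs _ _
    _ ≤ ∑ i ∈ range n, K * θ ^ (n + m - i) :=
        sum_le_sum fun i _ => hh _ _ _ (hxy.shift_iterate i)
    _ ≤ K * (θ ^ m / (1 - θ)) := by
        rw [← mul_sum]; exact mul_le_mul_of_nonneg_left hgeom (hh.nonneg x)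
    _ = K * θ ^ m / (1 - θ) := by ring

end CylinderLipschitzWith

lemma LipWrt.cylinderLipschitzWith {d : ℕ} {θ C : ℝ} {h : X d → ℝ} (hθ0 : 0 ≤ θ) (hθ1 : θ ≤ 1)
    (hh : LipWrt θ C h) : CylinderLipschitzWith θ (max C 0) h := fun m x y hxy =>
  calc |h x - h y| ≤ C * dtheta θ x y := hh x y
    _ ≤ max C 0 * dtheta θ x y :=
        mul_le_mul_of_nonneg_right (le_max_left C 0) (dtheta_nonneg hθ0 x y)
    _ ≤ max C 0 * θ ^ m :=
        mul_le_mul_of_nonneg_left (dtheta_le_pow hθ0 hθ1 hxy) (le_max_right C 0)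

section PeriodicOrbit

variable {α : Type*} [MeasurableSpace α] {T : α → α}

def periodicOrbitMeasure (T : α → α) (n : ℕ) (x : α) : Measure α :=
  (n : ℝ≥0∞)⁻¹ • ∑ i ∈ range n, Measure.dirac (T^[i] x)

lemma isProbabilityMeasure_periodicOrbitMeasure {n : ℕ} (hn : 0 < n) (x : α) :
    IsProbabilityMeasure (periodicOrbitMeasure T n x) := by
  constructor
  simp [periodicOrbitMeasure, ENNReal.inv_mul_cancel (Nat.cast_ne_zero.2 hn.ne')]

lemma map_periodicOrbitMeasure (hT : Measurable T) {n : ℕ} {x : α} (hx : IsPeriodicPt T n x) :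
    (periodicOrbitMeasure T n x).map T = periodicOrbitMeasure T n x := by
  have hsum : ∑ i ∈ range n, Measure.dirac (T^[i + 1] x) =
      ∑ i ∈ range n, Measure.dirac (T^[i] x) := by
    rcases n with _ | n
    · simp
    · rw [sum_range_succ, sum_range_succ', hx.eq, iterate_zero_apply, add_comm]
  simp only [periodicOrbitMeasure, Measure.map_smul, Measure.map_finset_sum hT.aemeasurable,
    Measure.map_dirac' hT, ← iterate_succ_apply' T, hsum]

lemma integral_periodicOrbitMeasure [MeasurableSingletonClass α] (n : ℕ) (x : α) (g : α → ℝ) :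
    ∫ y, g y ∂(periodicOrbitMeasure T n x) = birkhoffSum T g n x / n := by
  rw [periodicOrbitMeasure, integral_smul_measure,
    integral_finsetSum_measure fun i _ => integrable_dirac enorm_lt_top]
  simp [birkhoffSum, div_eq_inv_mul]

lemma integral_comp_iterate {μ : Measure α} (hT : MeasurePreserving T μ μ) {g : α → ℝ}
    (hg : Integrable g μ) (n : ℕ) : ∫ y, g (T^[n] y) ∂μ = ∫ y, g y ∂μ := by
  rw [← integral_map (hT.iterate n).measurable.aemeasurable
    (by rw [(hT.iterate n).map_eq]; exact hg.aestronglyMeasurable), (hT.iterate n).map_eq]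

lemma integral_birkhoffSum {μ : Measure α} (hT : MeasurePreserving T μ μ) {g : α → ℝ}
    (hg : Integrable g μ) (n : ℕ) : ∫ y, birkhoffSum T g n y ∂μ = n * ∫ y, g y ∂μ := by
  simp only [birkhoffSum]
  rw [integral_finsetSum (f := fun i y => g (T^[i] y)) _
    fun i _ => (hT.iterate i).integrable_comp_of_integrable hg]
  simp [integral_comp_iterate hT hg]

end PeriodicOrbit

section Beta

variable {d : ℕ} {h : X d → ℝ}

lemma integral_le_beta (hh : Continuous h) {μ : Measure (X d)} [IsProbabilityMeasure μ]
    (hμ : μ.map shift = μ) : ∫ x, h x ∂μ ≤ beta h := by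
  obtain ⟨B, hB⟩ := isCompact_univ.exists_bound_of_continuousOn hh.continuousOn
  refine le_csSup ⟨B, ?_⟩ ⟨μ, ‹_›, hμ, rfl⟩
  rintro _ ⟨ν, hν, -, rfl⟩
  simpa using (le_abs_self _).trans
    (norm_integral_le_of_norm_le_const (μ := ν) (.of_forall fun x => hB x (Set.mem_univ x)))

lemma birkhoff_le_mul_beta (hh : Continuous h) {n : ℕ} {x : X d} (hn : 0 < n)
    (hx : IsPeriodicPt shift n x) : birkhoff h n x ≤ n * beta h := by
  have := isProbabilityMeasure_periodicOrbitMeasure (T := shift) hn x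
  have hle := integral_le_beta hh (map_periodicOrbitMeasure measurable_shift hx)
  rwa [integral_periodicOrbitMeasure, div_le_iff₀ (Nat.cast_pos.2 hn), mul_comm] at hle

lemma Ifun_nonneg (hh : Continuous h) {x : X d} (hx : IsPeriodic x) : 0 ≤ Ifun h x := by
  obtain ⟨n, hn, hxn⟩ := hx
  have := birkhoff_le_mul_beta hh (IsPeriodicPt.minimalPeriod_pos hn hxn)
    (isPeriodicPt_minimalPeriod shift x)
  rw [Ifun, minPer]
  linarith

lemma exists_lt_integral_of_lt_beta [Nonempty (Fin d)] {r : ℝ} (hr : r < beta h) :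
    ∃ μ : Measure (X d), IsProbabilityMeasure μ ∧ μ.map shift = μ ∧ r < ∫ x, h x ∂μ := by
  let c : X d := fun _ => Classical.arbitrary _
  have hne : {r | ∃ μ : Measure (X d), IsProbabilityMeasure μ ∧ μ.map shift = μ ∧
      r = ∫ x, h x ∂μ}.Nonempty :=
    ⟨_, Measure.dirac c, inferInstance, by rw [Measure.map_dirac' measurable_shift]; rfl, rfl⟩
  obtain ⟨_, ⟨μ, hμ, hinv, rfl⟩, hlt⟩ := exists_lt_of_lt_csSup hne hr
  exact ⟨μ, hμ, hinv, hlt⟩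

end Beta

section SubAction

variable {d : ℕ} {θ K : ℝ} {f : X d → ℝ}

def subAction (f : X d → ℝ) (x : X d) : ℝ :=
  sSup {r | ∃ n y, 0 < n ∧ shift^[n] y = x ∧ r = birkhoff f n y - n * beta f}

lemma birkhoff_sub_mul_beta_le (hθ0 : 0 ≤ θ) (hθ1 : θ < 1) (hf : CylinderLipschitzWith θ K f)
    {n : ℕ} (hn : 0 < n) (y : X d) : birkhoff f n y - n * beta f ≤ K / (1 - θ) := by
  have hcmp := hf.abs_birkhoff_sub_le hθ0 hθ1
    (agree_repeatPrefix (m := 0) (z := y) hn (agree_zero _ _))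
  have hper := birkhoff_le_mul_beta (hf.continuous hθ0 hθ1) hn (isPeriodicPt_repeatPrefix n y)
  simp only [pow_zero, mul_one] at hcmp
  linarith [(abs_le.1 hcmp).2]

lemma le_subAction (hθ0 : 0 ≤ θ) (hθ1 : θ < 1) (hf : CylinderLipschitzWith θ K f) {n : ℕ}
    (hn : 0 < n) {x y : X d} (hy : shift^[n] y = x) :
    birkhoff f n y - n * beta f ≤ subAction f x :=
  le_csSup ⟨K / (1 - θ), by
    rintro _ ⟨n, y, hn, -, rfl⟩
    exact birkhoff_sub_mul_beta_le hθ0 hθ1 hf hn y⟩ ⟨n, y, hn, hy, rfl⟩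

lemma subAction_le [Nonempty (Fin d)] {x : X d} {c : ℝ}
    (h : ∀ n y, 0 < n → shift^[n] y = x → birkhoff f n y - n * beta f ≤ c) :
    subAction f x ≤ c :=
  csSup_le ⟨_, 1, splice 1 (fun _ => Classical.arbitrary _) x, one_pos, shift_iterate_splice _ _ _,
    rfl⟩ (by rintro _ ⟨n, y, hn, hy, rfl⟩; exact h n y hn hy)

lemma subAction_add_le [Nonempty (Fin d)] (hθ0 : 0 ≤ θ) (hθ1 : θ < 1)
    (hf : CylinderLipschitzWith θ K f) (x : X d) :
    subAction f x + f x - beta f ≤ subAction f (shift x) := by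
  suffices subAction f x ≤ subAction f (shift x) - f x + beta f by linarith
  refine subAction_le fun n y hn hy => ?_
  have hle := le_subAction hθ0 hθ1 hf n.succ_pos
    (show shift^[n + 1] y = shift x by rw [iterate_succ_apply', hy])
  rw [birkhoff_eq_birkhoffSum, birkhoffSum_succ, hy] at hle
  push_cast at hle
  rw [birkhoff_eq_birkhoffSum]
  linarith

lemma cylinderLipschitzWith_subAction [Nonempty (Fin d)] (hθ0 : 0 ≤ θ) (hθ1 : θ < 1)
    (hf : CylinderLipschitzWith θ K f) :
    CylinderLipschitzWith θ (K / (1 - θ)) (subAction f) := by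
  suffices h : ∀ m x x', Agree m x x' → subAction f x ≤ subAction f x' + K / (1 - θ) * θ ^ m by
    intro m x x' hxx'
    rw [abs_sub_le_iff]
    exact ⟨by linarith [h m x x' hxx'], by linarith [h m x' x hxx'.symm]⟩
  intro m x x' hxx'
  refine subAction_le fun n y hn hy => ?_
  have hcmp := hf.abs_birkhoff_sub_le hθ0 hθ1 (agree_splice hy hxx')
  have hle := le_subAction hθ0 hθ1 hf hn (shift_iterate_splice n y x')
  have hK : K * θ ^ m / (1 - θ) = K / (1 - θ) * θ ^ m := by ring
  linarith [(abs_le.1 hcmp).2]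

end SubAction

section Defect

variable {d : ℕ} {θ K : ℝ} {f : X d → ℝ}

def defect (f : X d → ℝ) (x : X d) : ℝ := beta f - f x + subAction f (shift x) - subAction f x

lemma defect_nonneg [Nonempty (Fin d)] (hθ0 : 0 ≤ θ) (hθ1 : θ < 1)
    (hf : CylinderLipschitzWith θ K f) (x : X d) : 0 ≤ defect f x := by
  have := subAction_add_le hθ0 hθ1 hf x
  rw [defect]
  linarith

lemma cylinderLipschitzWith_defect [Nonempty (Fin d)] (hθ0 : 0 < θ) (hθ1 : θ < 1)
    (hf : CylinderLipschitzWith θ K f) :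
    CylinderLipschitzWith θ (K + K / (1 - θ) / θ + K / (1 - θ)) (defect f) := by
  have hu := cylinderLipschitzWith_subAction hθ0.le hθ1 hf
  have hg := (((CylinderLipschitzWith.const (beta f)).sub hf).add (hu.comp_shift hθ0 hθ1.le)).sub hu
  rw [zero_add] at hg
  exact hg

lemma birkhoff_defect (f : X d → ℝ) (n : ℕ) (y : X d) :
    birkhoff (defect f) n y =
      n * beta f - birkhoff f n y + (subAction f (shift^[n] y) - subAction f y) := by
  have hterm : ∀ i, defect f (shift^[i] y) = (beta f - f (shift^[i] y)) +
      (subAction f (shift^[i + 1] y) - subAction f (shift^[i] y)) := fun i => by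
    rw [defect, iterate_succ_apply']
    ring
  rw [birkhoff, sum_congr rfl fun i _ => hterm i, sum_add_distrib,
    sum_range_sub (fun i => subAction f (shift^[i] y)), sum_sub_distrib, sum_const, card_range,
    nsmul_eq_mul, iterate_zero_apply, birkhoff]

lemma integral_defect [Nonempty (Fin d)] (hθ0 : 0 ≤ θ) (hθ1 : θ < 1)
    (hf : CylinderLipschitzWith θ K f) {μ : Measure (X d)} [IsProbabilityMeasure μ]
    (hμ : MeasurePreserving shift μ μ) : ∫ x, defect f x ∂μ = beta f - ∫ x, f x ∂μ := by
  have hfi := integrable_of_continuous (hf.continuous hθ0 hθ1) μ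
  have hβfi : Integrable (fun x => beta f - f x) μ := (integrable_const _).sub hfi
  have huc := (cylinderLipschitzWith_subAction hθ0 hθ1 hf).continuous hθ0 hθ1
  have hui := integrable_of_continuous huc μ
  have husi : Integrable (fun x => subAction f (shift x)) μ :=
    integrable_of_continuous (huc.comp continuous_shift) μ
  have hshift : ∫ x, subAction f (shift x) ∂μ = ∫ x, subAction f x ∂μ :=
    integral_comp_iterate hμ hui 1
  have hβfui : Integrable (fun x => beta f - f x + subAction f (shift x)) μ := hβfi.add husi
  simp only [defect]
  rw [integral_sub hβfui hui, integral_add hβfi husi, integral_sub (integrable_const _) hfi, hshift]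
  simp

end Defect

section Periodization

variable {d : ℕ} {θ K L : ℝ} {f : X d → ℝ}

lemma exists_birkhoff_defect_lt [Nonempty (Fin d)] (hθ0 : 0 < θ) (hθ1 : θ < 1)
    (hf : CylinderLipschitzWith θ K f) (N : ℕ) {δ : ℝ} (hδ : 0 < δ) :
    ∃ x, birkhoff (defect f) N x < δ := by
  have hN : (0 : ℝ) < N + 1 := by positivity
  obtain ⟨μ, hμ, hinv, hlt⟩ :=
    exists_lt_integral_of_lt_beta (h := f) (sub_lt_self (beta f) (div_pos hδ hN))
  have hpres : MeasurePreserving shift μ μ := ⟨measurable_shift, hinv⟩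
  have hgc := (cylinderLipschitzWith_defect hθ0 hθ1 hf).continuous hθ0.le hθ1
  obtain ⟨x, hx⟩ := exists_le_integral (integrable_of_continuous (continuous_birkhoff hgc N) μ)
  refine ⟨x, hx.trans_lt ?_⟩
  rw [birkhoff_eq_birkhoffSum, integral_birkhoffSum hpres (integrable_of_continuous hgc μ),
    integral_defect hθ0.le hθ1 hf hpres]
  calc (N : ℝ) * (beta f - ∫ x, f x ∂μ) ≤ N * (δ / (N + 1)) := by gcongr; linarith
    _ < δ := by rw [mul_div_assoc', div_lt_iff₀ hN]; linarith

lemma exists_periodic_Ifun_le [Nonempty (Fin d)] (hθ0 : 0 ≤ θ) (hθ1 : θ < 1)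
    (hf : CylinderLipschitzWith θ K f) (hg : CylinderLipschitzWith θ L (defect f))
    (x : X d) (m : ℕ) :
    ∃ y, IsPeriodic y ∧ Ifun f y ≤ birkhoff (defect f) (d ^ m) x + L * θ ^ m / (1 - θ) := by
  have hgnn := defect_nonneg hθ0 hθ1 hf
  obtain ⟨i, j, hij, hj, hagree⟩ := exists_agree_shift_iterate x m
  set z := shift^[i] x
  have hp : 0 < j - i := Nat.sub_pos_of_lt hij
  have hz : Agree m (shift^[j - i] z) z := by
    rw [← iterate_add_apply, Nat.sub_add_cancel hij.le]
    exact hagree.symm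
  have hy := isPeriodicPt_repeatPrefix (j - i) z
  refine ⟨repeatPrefix (j - i) z, ⟨j - i, hp, hy⟩, ?_⟩
  have hcmp := hg.abs_birkhoff_sub_le hθ0 hθ1 (agree_repeatPrefix hp hz)
  calc Ifun f (repeatPrefix (j - i) z)
      = birkhoff (defect f) (minPer (repeatPrefix (j - i) z)) (repeatPrefix (j - i) z) := by
        rw [birkhoff_defect, minPer, (isPeriodicPt_minimalPeriod _ _).eq, Ifun, minPer]
        ring
    _ ≤ birkhoff (defect f) (j - i) (repeatPrefix (j - i) z) :=
        birkhoff_shift_iterate_le hgnn (i := 0) (by rw [zero_add]; exact hy.minimalPeriod_le hp) _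
    _ ≤ birkhoff (defect f) (j - i) z + L * θ ^ m / (1 - θ) := by linarith [(abs_le.1 hcmp).1]
    _ ≤ birkhoff (defect f) (d ^ m) x + L * θ ^ m / (1 - θ) := by
        gcongr
        exact birkhoff_shift_iterate_le hgnn (by omega) x

lemma exists_periodic_Ifun_lt [Nonempty (Fin d)] (hθ0 : 0 < θ) (hθ1 : θ < 1)
    (hf : CylinderLipschitzWith θ K f) {ε : ℝ} (hε : 0 < ε) :
    ∃ y, IsPeriodic y ∧ Ifun f y < ε := by
  obtain ⟨L, hg⟩ : ∃ L, CylinderLipschitzWith θ L (defect f) :=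
    ⟨_, cylinderLipschitzWith_defect hθ0 hθ1 hf⟩
  have hlim : Tendsto (fun m : ℕ => L * θ ^ m / (1 - θ)) atTop (𝓝 0) := by
    simpa using ((tendsto_pow_atTop_nhds_zero_of_lt_one hθ0.le hθ1).const_mul L).div_const (1 - θ)
  obtain ⟨m, hm⟩ := (hlim.eventually_lt_const (half_pos hε)).exists
  obtain ⟨x, hx⟩ := exists_birkhoff_defect_lt hθ0 hθ1 hf (d ^ m) (half_pos hε)
  obtain ⟨y, hy, hIy⟩ := exists_periodic_Ifun_le hθ0.le hθ1 hf hg x m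
  exact ⟨y, hy, by linarith⟩

end Periodization

theorem stmt0 (d : ℕ) (hd : 0 < d) (θ C : ℝ) (hθ0 : 0 < θ) (hθ1 : θ < 1)
    (f : X d → ℝ) (hf : LipWrt θ C f) :
    sInf {r : ℝ | ∃ x : X d, IsPeriodic x ∧ r = Ifun f x} = 0 := by
  have : Nonempty (Fin d) := ⟨⟨0, hd⟩⟩
  have hfc := hf.cylinderLipschitzWith hθ0.le hθ1.le
  have hnonneg : ∀ r ∈ {r : ℝ | ∃ x : X d, IsPeriodic x ∧ r = Ifun f x}, 0 ≤ r := by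
    rintro _ ⟨x, hx, rfl⟩
    exact Ifun_nonneg (hfc.continuous hθ0.le hθ1) hx
  refine le_antisymm (le_of_forall_pos_lt_add fun ε hε => ?_)
    (le_csInf ⟨_, fun _ => ⟨0, hd⟩, ⟨1, one_pos, rfl⟩, rfl⟩ hnonneg)
  obtain ⟨y, hy, hIy⟩ := exists_periodic_Ifun_lt hθ0 hθ1 hfc hε
  exact (csInf_le ⟨0, hnonneg⟩ ⟨y, hy, rfl⟩).trans_lt (by linarith)
end
end

section
/- Let ν be an ergodic shift-invariant probability on X, f : X → ℝ continuous, and A a Borel set with ν(A) > 0. Then there exists p ∈ A such that for every ε > 0 there exists an integer N > 0 with σ^N(p) ∈ A and |Σ_{i=0}^{N−1} f(σ^i p) − N ∫ f dν| < ε. Moreover the set of such p in A has full ν-measure in A. -/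
open MeasureTheory Filter Real Topology
open scoped ENNReal

noncomputable section

/-!
Suppose `B ⊆ A` has positive measure and every return of a point of `B` to `B` carries a Birkhoff
sum `S_N = Σ_{i<N} (f - ∫ f) ∘ σⁱ` of absolute value at least `ε`. Along any orbit the cocycle
values `S_m` at two returns to `B` then differ by at least `ε`, so among the first `n` returns at
most `2M/ε + 1` have `|S_m| ≤ M`, and the others are counted by `|S_m| / M`. By the L² mean ergodic
theorem `∫ |S_m| = o(m)`, so with `M = ηn` this gives
`(1/n) Σ_{m<n} ν(B ∩ σ⁻ᵐ B) ≤ 2ην(B)/ε + o(1)`. Ergodicity makes the left side tend to `ν(B)²`,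
and `η → 0` forces `ν(B) = 0`. Applying this to the sets of points of `A` whose returns to `A`
all stay `1/(k+1)` away from the mean gives the statement.
-/

open Finset

namespace Finset

variable {ι : Type*} {s : Finset ι} {S : ι → ℝ} {ε M : ℝ}

theorem card_le_of_separated_of_abs_le (hε : 0 < ε) (hM : 0 ≤ M)
    (hsep : ∀ i ∈ s, ∀ j ∈ s, i ≠ j → ε ≤ |S i - S j|) (hS : ∀ i ∈ s, |S i| ≤ M) :
    (#s : ℝ) ≤ 2 * M / ε + 1 := by
  let bin : ι → ℕ := fun i ↦ ⌊(S i + M) / ε⌋₊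
  have hbin_lt : ∀ i ∈ s, ∀ j ∈ s, i ≠ j → S i ≤ S j → bin i < bin j := by
    intro i hi j hj hij hle
    have hgap := hsep i hi j hj hij
    rw [abs_sub_comm, abs_of_nonneg (sub_nonneg.2 hle)] at hgap
    have hstep : (S i + M) / ε + 1 ≤ (S j + M) / ε := by
      rw [div_add_one hε.ne', div_le_div_iff_of_pos_right hε]
      linarith
    have hnonneg : 0 ≤ (S i + M) / ε :=
      div_nonneg (by linarith [neg_abs_le (S i), hS i hi]) hε.le
    calc bin i < bin i + 1 := Nat.lt_succ_self _
      _ = ⌊(S i + M) / ε + 1⌋₊ := (Nat.floor_add_one hnonneg).symm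
      _ ≤ bin j := Nat.floor_le_floor hstep
  have hinj : Set.InjOn bin s := by
    intro i hi j hj hbin
    by_contra hij
    rcases le_total (S i) (S j) with hle | hle
    · exact (hbin_lt i hi j hj hij hle).ne hbin
    · exact (hbin_lt j hj i hi (Ne.symm hij) hle).ne' hbin
  have hmaps : ∀ i ∈ s, bin i ∈ range (⌊2 * M / ε⌋₊ + 1) := by
    intro i hi
    refine mem_range.2 (Nat.lt_succ_of_le (Nat.floor_le_floor ?_))
    gcongr
    linarith [le_abs_self (S i), hS i hi]
  calc (#s : ℝ) ≤ ⌊2 * M / ε⌋₊ + 1 := by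
        exact_mod_cast (card_le_card_of_injOn bin hmaps hinj).trans (card_range _).le
    _ ≤ 2 * M / ε + 1 := by gcongr; exact Nat.floor_le (by positivity)

theorem card_le_of_separated (hε : 0 < ε) (hM : 0 < M)
    (hsep : ∀ i ∈ s, ∀ j ∈ s, i ≠ j → ε ≤ |S i - S j|) :
    (#s : ℝ) ≤ 2 * M / ε + 1 + ∑ i ∈ s, |S i| / M := by
  classical
  have hsmall : (#(s.filter fun i ↦ |S i| ≤ M) : ℝ) ≤ 2 * M / ε + 1 :=
    card_le_of_separated_of_abs_le hε hM.le
      (fun i hi j hj ↦ hsep i (mem_filter.1 hi).1 j (mem_filter.1 hj).1)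
      (fun i hi ↦ (mem_filter.1 hi).2)
  have hlarge : (#(s.filter fun i ↦ ¬|S i| ≤ M) : ℝ) ≤ ∑ i ∈ s, |S i| / M := by
    rw [card_eq_sum_ones, Nat.cast_sum, Nat.cast_one]
    calc ∑ i ∈ s.filter (fun i ↦ ¬|S i| ≤ M), (1 : ℝ)
        ≤ ∑ i ∈ s.filter (fun i ↦ ¬|S i| ≤ M), |S i| / M :=
          sum_le_sum fun i hi ↦ (one_le_div hM).2 (not_le.1 (mem_filter.1 hi).2).le
      _ ≤ ∑ i ∈ s, |S i| / M :=
          sum_le_sum_of_subset_of_nonneg (filter_subset _ _) fun i _ _ ↦ by positivity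
  rw [← card_filter_add_card_filter_not (fun i ↦ |S i| ≤ M), Nat.cast_add]
  linarith

end Finset

section MeanErgodic

variable {α : Type*} [MeasurableSpace α] {μ : Measure α} {T : α → α}

namespace MeasureTheory.Lp

theorem integral_norm_le_norm {E : Type*} [NormedAddCommGroup E] {p : ℝ≥0∞} [Fact (1 ≤ p)]
    [IsProbabilityMeasure μ] (g : Lp E p μ) : ∫ x, ‖g x‖ ∂μ ≤ ‖g‖ := by
  rw [integral_norm_eq_lintegral_enorm (Lp.aestronglyMeasurable g),
    ← eLpNorm_one_eq_lintegral_enorm, Lp.norm_def]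
  exact ENNReal.toReal_mono (Lp.eLpNorm_ne_top g)
    (eLpNorm_le_eLpNorm_of_exponent_le Fact.out (Lp.aestronglyMeasurable g))

theorem coeFn_birkhoffSum_compMeasurePreserving {E : Type*} [NormedAddCommGroup E] {p : ℝ≥0∞}
    (hT : MeasurePreserving T μ μ) (g : Lp E p μ) (n : ℕ) :
    ⇑(birkhoffSum (compMeasurePreserving T hT) id n g : Lp E p μ) =ᵐ[μ] birkhoffSum T g n := by
  induction n with
  | zero => simpa [birkhoffSum] using Lp.coeFn_zero E p μ
  | succ n ih =>
    have hiter : ⇑((compMeasurePreserving T hT)^[n] g) =ᵐ[μ] g ∘ T^[n] := by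
      rw [compMeasurePreserving_iterate]; exact coeFn_compMeasurePreserving g _
    filter_upwards [Lp.coeFn_add (birkhoffSum (compMeasurePreserving T hT) id n g)
      ((compMeasurePreserving T hT)^[n] g), ih, hiter] with x hadd hsum hx
    simp only [birkhoffSum_succ, id, hadd, Pi.add_apply, hsum, hx, Function.comp_apply]

theorem coeFn_birkhoffAverage_compMeasurePreserving {E : Type*} [NormedAddCommGroup E]
    [NormedSpace ℝ E] {p : ℝ≥0∞} (hT : MeasurePreserving T μ μ) (g : Lp E p μ) (n : ℕ) :
    ⇑(birkhoffAverage ℝ (compMeasurePreserving T hT) id n g : Lp E p μ)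
      =ᵐ[μ] birkhoffAverage ℝ T g n := by
  filter_upwards [Lp.coeFn_smul (n : ℝ)⁻¹ (birkhoffSum (compMeasurePreserving T hT) id n g),
    coeFn_birkhoffSum_compMeasurePreserving hT g n] with x hsmul hsum
  simp only [birkhoffAverage, hsmul, Pi.smul_apply, hsum]

end MeasureTheory.Lp

def koopman (hT : MeasurePreserving T μ μ) : Lp ℝ 2 μ →L[ℝ] Lp ℝ 2 μ :=
  (Lp.compMeasurePreservingₗᵢ ℝ T hT).toContinuousLinearMap

theorem Ergodic.starProjection_eqLocus_koopman_ae_eq [IsProbabilityMeasure μ] (hT : Ergodic T μ)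
    {f : α → ℝ} (hf : MemLp f 2 μ) :
    ((koopman hT.toMeasurePreserving).eqLocus (1 : Lp ℝ 2 μ →L[ℝ] Lp ℝ 2 μ)).starProjection
      (hf.toLp f)
      =ᵐ[μ] fun _ ↦ ∫ y, f y ∂μ := by
  set K := (koopman hT.toMeasurePreserving).eqLocus (1 : Lp ℝ 2 μ →L[ℝ] Lp ℝ 2 μ)
  set P := K.starProjection (hf.toLp f)
  obtain ⟨c, hc⟩ : ∃ c, (P : α →ₘ[μ] ℝ) = AEEqFun.const α c :=
    hT.eq_const_of_compMeasurePreserving_eq <| congrArg Subtype.val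
      (K.orthogonalProjectionOnto (hf.toLp f)).2
  have hPc : P =ᵐ[μ] fun _ ↦ c := by
    change ⇑(P : α →ₘ[μ] ℝ) =ᵐ[μ] _
    rw [hc]; exact AEEqFun.coeFn_const α c
  -- `hf.toLp f - P` is orthogonal to the invariant constant `1`.
  let one := indicatorConstLp 2 MeasurableSet.univ (measure_ne_top μ _) (1 : ℝ)
  have hone : one ∈ K := Lp.indicatorConstLp_compMeasurePreserving _ _ _ _
  have horth := K.starProjection_inner_eq_zero (hf.toLp f) one hone
  rw [real_inner_comm, L2.inner_indicatorConstLp_one, Measure.restrict_univ,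
    integral_congr_ae ((Lp.coeFn_sub _ _).trans (MemLp.coeFn_toLp hf |>.sub hPc)),
    Pi.sub_def, integral_sub (hf.integrable one_le_two) (integrable_const c)] at horth
  simp only [integral_const, probReal_univ, smul_eq_mul, one_mul] at horth
  rwa [sub_eq_zero.1 horth]

theorem Ergodic.tendsto_integral_abs_birkhoffAverage_sub [IsProbabilityMeasure μ]
    (hT : Ergodic T μ) {f : α → ℝ} (hf : MemLp f 2 μ) :
    Tendsto (fun n ↦ ∫ x, |birkhoffAverage ℝ T f n x - ∫ y, f y ∂μ| ∂μ) atTop (𝓝 0) := by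
  set U := koopman hT.toMeasurePreserving
  set P := (U.eqLocus (1 : Lp ℝ 2 μ →L[ℝ] Lp ℝ 2 μ)).starProjection (hf.toLp f)
  have hconv : Tendsto (birkhoffAverage ℝ U id · (hf.toLp f)) atTop (𝓝 P) :=
    U.tendsto_birkhoffAverage_orthogonalProjection
      (LinearIsometry.norm_toContinuousLinearMap_le _) _
  refine squeeze_zero (fun n ↦ integral_nonneg fun x ↦ abs_nonneg _) (fun n ↦ ?_)
    (tendsto_iff_norm_sub_tendsto_zero.mp hconv)
  calc ∫ x, |birkhoffAverage ℝ T f n x - ∫ y, f y ∂μ| ∂μ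
      = ∫ x, ‖(birkhoffAverage ℝ U id n (hf.toLp f) - P : Lp ℝ 2 μ) x‖ ∂μ := by
        refine integral_congr_ae ?_
        filter_upwards [Lp.coeFn_sub (birkhoffAverage ℝ U id n (hf.toLp f)) P,
          Lp.coeFn_birkhoffAverage_compMeasurePreserving hT.toMeasurePreserving (hf.toLp f) n,
          hT.toMeasurePreserving.quasiMeasurePreserving.birkhoffAverage_ae_eq_of_ae_eq ℝ
            (MemLp.coeFn_toLp hf) n, hT.starProjection_eqLocus_koopman_ae_eq hf]
          with x hsub hU hf' hP
        rw [hsub, Pi.sub_apply, Real.norm_eq_abs, hP, ← hf', ← hU]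
        rfl
    _ ≤ _ := Lp.integral_norm_le_norm _

end MeanErgodic

section Atkinson

variable {α : Type*} {T : α → α} {ψ : α → ℝ} {B : Set α} {ε : ℝ}

theorem abs_birkhoffSum_eq_mul_abs_birkhoffAverage (T : α → α) (ψ : α → ℝ) (n : ℕ) (x : α) :
    |birkhoffSum T ψ n x| = n * |birkhoffAverage ℝ T ψ n x| := by
  rcases eq_or_ne n 0 with rfl | hn
  · simp [birkhoffSum_zero]
  · rw [birkhoffAverage, smul_eq_mul, abs_mul, abs_inv, Nat.abs_cast,
      mul_inv_cancel_left₀ (by exact_mod_cast hn)]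

theorem birkhoffSum_sub_const (T : α → α) (ψ : α → ℝ) (c : ℝ) (n : ℕ) (x : α) :
    birkhoffSum T (fun y ↦ ψ y - c) n x = birkhoffSum T ψ n x - n * c := by
  simp [birkhoffSum, sum_sub_distrib]

open Classical in
theorem birkhoffSum_indicator_one {R : Type*} [AddCommMonoidWithOne R] (T : α → α) (B : Set α)
    (n : ℕ) (x : α) :
    birkhoffSum T (B.indicator (1 : α → R)) n x = #((range n).filter fun m ↦ T^[m] x ∈ B) := by
  simp only [birkhoffSum, Set.indicator_apply, Pi.one_apply]
  rw [sum_boole]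

theorem le_abs_birkhoffSum_sub_birkhoffSum
    (hret : ∀ x ∈ B, ∀ N, 0 < N → T^[N] x ∈ B → ε ≤ |birkhoffSum T ψ N x|)
    {x : α} {m₁ m₂ : ℕ} (hlt : m₁ < m₂) (h₁ : T^[m₁] x ∈ B) (h₂ : T^[m₂] x ∈ B) :
    ε ≤ |birkhoffSum T ψ m₂ x - birkhoffSum T ψ m₁ x| := by
  obtain ⟨k, rfl⟩ := Nat.exists_eq_add_of_lt hlt
  rw [add_assoc, birkhoffSum_add, add_sub_cancel_left]
  exact hret _ h₁ _ k.succ_pos (by rwa [← Function.iterate_add_apply, add_comm])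

open Classical in
theorem card_filter_iterate_mem_le
    (hret : ∀ x ∈ B, ∀ N, 0 < N → T^[N] x ∈ B → ε ≤ |birkhoffSum T ψ N x|)
    (hε : 0 < ε) {M : ℝ} (hM : 0 < M) (n : ℕ) (x : α) :
    (#((range n).filter fun m ↦ T^[m] x ∈ B) : ℝ)
      ≤ 2 * M / ε + 1 + ∑ m ∈ range n, |birkhoffSum T ψ m x| / M := by
  refine (card_le_of_separated (S := fun m ↦ birkhoffSum T ψ m x) hε hM ?_).trans ?_
  · intro i hi j hj hij
    rcases hij.lt_or_gt with h | h
    · rw [abs_sub_comm]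
      exact le_abs_birkhoffSum_sub_birkhoffSum hret h (mem_filter.1 hi).2 (mem_filter.1 hj).2
    · exact le_abs_birkhoffSum_sub_birkhoffSum hret h (mem_filter.1 hj).2 (mem_filter.1 hi).2
  · gcongr
    exact filter_subset _ _

variable [MeasurableSpace α] {μ : Measure α}

theorem Measurable.birkhoffSum (hT : Measurable T) (hψ : Measurable ψ) (n : ℕ) :
    Measurable (birkhoffSum T ψ n) :=
  Finset.measurable_sum (range n) fun k _ ↦ hψ.comp (hT.iterate k)

theorem MeasureTheory.Integrable.birkhoffSum (hT : MeasurePreserving T μ μ) (hψ : Integrable ψ μ)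
    (n : ℕ) : Integrable (birkhoffSum T ψ n) μ :=
  integrable_finsetSum (range n) fun k _ ↦ (hT.iterate k).integrable_comp_of_integrable hψ

theorem setIntegral_birkhoffSum_indicator_one [IsFiniteMeasure μ] (hT : MeasurePreserving T μ μ)
    {A : Set α} (hB : MeasurableSet B) (n : ℕ) :
    ∫ x in A, birkhoffSum T (B.indicator 1) n x ∂μ = ∑ m ∈ range n, μ.real (A ∩ T^[m] ⁻¹' B) := by
  have hint : ∀ m, Integrable (fun x ↦ B.indicator (1 : α → ℝ) (T^[m] x)) μ := fun m ↦
    (hT.iterate m).integrable_comp_of_integrable ((integrable_const (1 : ℝ)).indicator hB)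
  simp only [birkhoffSum]
  rw [integral_finsetSum _ fun m _ ↦ (hint m).integrableOn]
  refine sum_congr rfl fun m _ ↦ ?_
  change ∫ x in A, (T^[m] ⁻¹' B).indicator 1 x ∂μ = _
  rw [setIntegral_indicator ((hT.iterate m).measurable hB)]
  simp

theorem Ergodic.tendsto_average_measureReal_inter_preimage [IsProbabilityMeasure μ]
    (hT : Ergodic T μ) {A : Set α} (hB : MeasurableSet B) :
    Tendsto (fun n : ℕ ↦ (n : ℝ)⁻¹ * ∑ m ∈ range n, μ.real (A ∩ T^[m] ⁻¹' B)) atTop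
      (𝓝 (μ.real A * μ.real B)) := by
  have hL1 := hT.tendsto_integral_abs_birkhoffAverage_sub
    (memLp_indicator_const 2 hB 1 (Or.inr (measure_ne_top μ B)) : MemLp (B.indicator 1) 2 μ)
  rw [integral_indicator_one hB] at hL1
  rw [← tendsto_sub_nhds_zero_iff]
  refine squeeze_zero_norm (fun n ↦ ?_) hL1
  have havg : Integrable (birkhoffAverage ℝ T (B.indicator 1) n) μ :=
    (((integrable_const (1 : ℝ)).indicator hB).birkhoffSum hT.toMeasurePreserving n).smul _
  calc ‖(n : ℝ)⁻¹ * ∑ m ∈ range n, μ.real (A ∩ T^[m] ⁻¹' B) - μ.real A * μ.real B‖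
      = |∫ x in A, (birkhoffAverage ℝ T (B.indicator 1) n x - μ.real B) ∂μ| := by
        rw [integral_sub havg.integrableOn (integrableOn_const (measure_ne_top _ _)),
          setIntegral_const, Real.norm_eq_abs]
        simp only [birkhoffAverage, smul_eq_mul]
        rw [integral_const_mul, setIntegral_birkhoffSum_indicator_one hT.toMeasurePreserving hB]
    _ ≤ ∫ x in A, |birkhoffAverage ℝ T (B.indicator 1) n x - μ.real B| ∂μ :=
        abs_integral_le_integral_abs
    _ ≤ ∫ x, |birkhoffAverage ℝ T (B.indicator 1) n x - μ.real B| ∂μ :=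
        setIntegral_le_integral (havg.sub (integrable_const _)).abs
          (.of_forall fun _ ↦ abs_nonneg _)

theorem sum_measureReal_inter_preimage_le [IsFiniteMeasure μ] (hT : MeasurePreserving T μ μ)
    (hψ : Integrable ψ μ) (hB : MeasurableSet B)
    (hret : ∀ x ∈ B, ∀ N, 0 < N → T^[N] x ∈ B → ε ≤ |birkhoffSum T ψ N x|)
    (hε : 0 < ε) {M : ℝ} (hM : 0 < M) (n : ℕ) :
    ∑ m ∈ range n, μ.real (B ∩ T^[m] ⁻¹' B)
      ≤ (2 * M / ε + 1) * μ.real B + (∑ m ∈ range n, ∫ x, |birkhoffSum T ψ m x| ∂μ) / M := by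
  set F : α → ℝ := fun x ↦ ∑ m ∈ range n, |birkhoffSum T ψ m x| / M
  have hF : Integrable F μ :=
    integrable_finsetSum _ fun m _ ↦ ((hψ.birkhoffSum hT m).abs).div_const M
  have hF_nonneg : 0 ≤ F := fun x ↦ sum_nonneg fun m _ ↦ by positivity
  rw [← setIntegral_birkhoffSum_indicator_one hT hB]
  calc ∫ x in B, birkhoffSum T (B.indicator 1) n x ∂μ
      ≤ ∫ x in B, (2 * M / ε + 1 + F x) ∂μ := by
        refine setIntegral_mono_on
          (((integrable_const 1).indicator hB).birkhoffSum hT n).integrableOn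
          ((integrable_const _).add hF).integrableOn hB fun x _ ↦ ?_
        rw [birkhoffSum_indicator_one]
        exact card_filter_iterate_mem_le hret hε hM n x
    _ = (2 * M / ε + 1) * μ.real B + ∫ x in B, F x ∂μ := by
        rw [integral_add (integrable_const _) hF.integrableOn, setIntegral_const, smul_eq_mul,
          mul_comm]
    _ ≤ (2 * M / ε + 1) * μ.real B + ∫ x, F x ∂μ :=
        add_le_add_right (setIntegral_le_integral hF (.of_forall hF_nonneg)) _
    _ = (2 * M / ε + 1) * μ.real B + (∑ m ∈ range n, ∫ x, |birkhoffSum T ψ m x| ∂μ) / M := by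
        rw [integral_finsetSum _ fun m _ ↦ ((hψ.birkhoffSum hT m).abs).div_const M, sum_div]
        simp only [integral_div]

theorem average_measureReal_inter_preimage_le [IsFiniteMeasure μ] (hT : MeasurePreserving T μ μ)
    (hψ : Integrable ψ μ) (hB : MeasurableSet B)
    (hret : ∀ x ∈ B, ∀ N, 0 < N → T^[N] x ∈ B → ε ≤ |birkhoffSum T ψ N x|)
    (hε : 0 < ε) {η : ℝ} (hη : 0 < η) {n : ℕ} (hn : 0 < n) :
    (n : ℝ)⁻¹ * ∑ m ∈ range n, μ.real (B ∩ T^[m] ⁻¹' B)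
      ≤ 2 * η / ε * μ.real B + μ.real B * (n : ℝ)⁻¹
        + η⁻¹ * ((n : ℝ)⁻¹ * ∑ m ∈ range n, ∫ x, |birkhoffAverage ℝ T ψ m x| ∂μ) := by
  have htail : ∑ m ∈ range n, ∫ x, |birkhoffSum T ψ m x| ∂μ
      ≤ n * ∑ m ∈ range n, ∫ x, |birkhoffAverage ℝ T ψ m x| ∂μ := by
    rw [mul_sum]
    refine sum_le_sum fun m hm ↦ ?_
    simp only [abs_birkhoffSum_eq_mul_abs_birkhoffAverage, integral_const_mul]
    exact mul_le_mul_of_nonneg_right (by exact_mod_cast (mem_range.1 hm).le)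
      (integral_nonneg fun _ ↦ abs_nonneg _)
  calc (n : ℝ)⁻¹ * ∑ m ∈ range n, μ.real (B ∩ T^[m] ⁻¹' B)
      ≤ (n : ℝ)⁻¹ * ((2 * (η * n) / ε + 1) * μ.real B
          + (n * ∑ m ∈ range n, ∫ x, |birkhoffAverage ℝ T ψ m x| ∂μ) / (η * n)) := by
        gcongr
        exact (sum_measureReal_inter_preimage_le hT hψ hB hret hε (M := η * n) (by positivity)
          n).trans (by gcongr)
    _ = _ := by field_simp

theorem Ergodic.measure_eq_zero_of_le_abs_birkhoffSum [IsProbabilityMeasure μ] (hT : Ergodic T μ)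
    (hψ : MemLp ψ 2 μ) (hψ₀ : ∫ x, ψ x ∂μ = 0) (hB : MeasurableSet B)
    (hret : ∀ x ∈ B, ∀ N, 0 < N → T^[N] x ∈ B → ε ≤ |birkhoffSum T ψ N x|) (hε : 0 < ε) :
    μ B = 0 := by
  by_contra hB₀
  set b := μ.real B
  have hb : 0 < b := ENNReal.toReal_pos hB₀ (measure_ne_top μ B)
  have hL1 : Tendsto (fun m ↦ ∫ x, |birkhoffAverage ℝ T ψ m x| ∂μ) atTop (𝓝 0) := by
    simpa only [hψ₀, sub_zero] using hT.tendsto_integral_abs_birkhoffAverage_sub hψ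
  -- `η = ε b / 4` makes the limit of the upper bound `b² / 2`.
  set η := ε * b / 4
  have hη : 0 < η := by positivity
  have hlim := le_of_tendsto_of_tendsto (hT.tendsto_average_measureReal_inter_preimage hB)
    ((tendsto_const_nhds.add (tendsto_inv_atTop_nhds_zero_nat.const_mul b)).add
      (hL1.cesaro.const_mul η⁻¹))
    (eventually_atTop.2 ⟨1, fun n hn ↦ average_measureReal_inter_preimage_le
      hT.toMeasurePreserving (hψ.integrable one_le_two) hB hret hε hη hn⟩)
  simp only [mul_zero, add_zero] at hlim
  have hη_eq : 2 * η / ε * b = b * b / 2 := by field_simp; ring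
  nlinarith

theorem Ergodic.ae_exists_iterate_mem_abs_birkhoffSum_lt [IsProbabilityMeasure μ]
    (hT : Ergodic T μ) (hψm : Measurable ψ) (hψ : MemLp ψ 2 μ) (hψ₀ : ∫ x, ψ x ∂μ = 0)
    {A : Set α} (hA : MeasurableSet A) :
    ∀ᵐ x ∂μ, x ∈ A → ∀ δ > 0, ∃ N, 0 < N ∧ T^[N] x ∈ A ∧ |birkhoffSum T ψ N x| < δ := by
  let bad : ℕ → Set α := fun k ↦
    A ∩ {x | ∀ N, 0 < N → T^[N] x ∈ A → 1 / ((k : ℝ) + 1) ≤ |birkhoffSum T ψ N x|}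
  have hbad : ∀ k, μ (bad k) = 0 := by
    intro k
    have hmeas : MeasurableSet (bad k) := by
      refine hA.inter ?_
      rw [Set.ofPred_forall]
      exact .iInter fun N ↦ (MeasurableSet.const _).imp <| (hT.measurable.iterate N hA).imp <|
        measurableSet_le measurable_const (hT.measurable.birkhoffSum hψm N).abs
    exact hT.measure_eq_zero_of_le_abs_birkhoffSum hψ hψ₀ hmeas
      (fun x hx N hN hNx ↦ hx.2 N hN hNx.1) (by positivity)
  filter_upwards [ae_all_iff.2 fun k ↦ measure_eq_zero_iff_ae_notMem.1 (hbad k)]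
    with x hx hxA δ hδ
  by_contra! hfar
  obtain ⟨k, hk⟩ := exists_nat_one_div_lt hδ
  exact hx k ⟨hxA, fun N hN hNA ↦ hk.le.trans (hfar N hN hNA)⟩

end Atkinson

theorem stmt1_general (d : ℕ) (μ : Measure (X d)) [IsProbabilityMeasure μ]
    (hμ : Ergodic shift μ) (f : X d → ℝ) (hf : Continuous f)
    (A : Set (X d)) (hA : MeasurableSet A) (hA0 : 0 < μ A) :
    (∃ p ∈ A, ∀ ε > (0 : ℝ), ∃ N : ℕ, 0 < N ∧ shift^[N] p ∈ A ∧
      |birkhoff f N p - (N : ℝ) * ∫ x, f x ∂μ| < ε) ∧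
    μ (A \ {p : X d | ∀ ε > (0 : ℝ), ∃ N : ℕ, 0 < N ∧ shift^[N] p ∈ A ∧
      |birkhoff f N p - (N : ℝ) * ∫ x, f x ∂μ| < ε}) = 0 := by
  set c := ∫ x, f x ∂μ
  set good := {p : X d | ∀ ε > (0 : ℝ), ∃ N : ℕ, 0 < N ∧ shift^[N] p ∈ A ∧
    |birkhoff f N p - (N : ℝ) * c| < ε}
  have hf2 : MemLp f 2 μ := hf.memLp_of_hasCompactSupport (.of_compactSpace f)
  have hmean : ∫ x, (f x - c) ∂μ = 0 := by
    rw [integral_sub (hf2.integrable one_le_two) (integrable_const c)]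
    simp [c]
  have hae := hμ.ae_exists_iterate_mem_abs_birkhoffSum_lt (hf.measurable.sub_const c)
    (hf2.sub (memLp_const c)) hmean hA
  simp only [birkhoffSum_sub_const] at hae
  have hnull : μ (A \ good) = 0 := by
    refine measure_mono_null ?_ (ae_iff.1 hae)
    exact fun p hp hgood ↦ hp.2 (hgood hp.1)
  refine ⟨?_, hnull⟩
  by_contra hnone
  refine hA0.ne' (measure_mono_null (fun p hp ↦ ?_) hnull)
  exact ⟨hp, fun hgood ↦ hnone ⟨p, hp, hgood⟩⟩

theorem stmt1 (d : ℕ) (hd : 0 < d) (μ : Measure (X d)) [IsProbabilityMeasure μ]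
    (hμ : Ergodic shift μ) (f : X d → ℝ) (hf : Continuous f)
    (A : Set (X d)) (hA : MeasurableSet A) (hA0 : 0 < μ A) :
    (∃ p ∈ A, ∀ ε > (0 : ℝ), ∃ N : ℕ, 0 < N ∧ shift^[N] p ∈ A ∧
      |birkhoff f N p - (N : ℝ) * ∫ x, f x ∂μ| < ε) ∧
    μ (A \ {p : X d | ∀ ε > (0 : ℝ), ∃ N : ℕ, 0 < N ∧ shift^[N] p ∈ A ∧
      |birkhoff f N p - (N : ℝ) * ∫ x, f x ∂μ| < ε}) = 0 :=
  stmt1_general d μ hμ f hf A hA hA0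
end
end
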